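/- arXiv:math-ph/9902025 — 2 statements merged into one kernel-verified Lean document; each statement's English description precedes it below -/
import Mathlib

section
/- For all real w and x, (1/√2)·V_0(|w−x|/√2)·(1/V_0(w) + 1/V_0(x)) ≥ 1. -/
/-!
Substituting `u = t² - x²` shows `V0 x = √π e^{x²} erfc |x|`; what matters are the Mills-ratio bounds
`√(x² + 2) - |x| ≤ V0 x ≤ 2 (√(x² + 1) - |x|)`. Integrating by parts,
`∫₀^∞ e^{-u} (g u - g' u) du = g 0`, and for `g u = √(x² + u + c) - √(x² + u)` the function `g - g'`
lies below `1 / √(x² + u)` when `c = 2` (by AM-GM) and above half of it when `c = 1`.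

With `d = |w - x|`, the lower bound gives `V0 (d / √2) / √2 ≥ 2 / (√(d² + 4) + d)` and the upper bound
gives `1 / V0 y ≥ (√(y² + 1) + |y|) / 2`. Since `d ≤ |w| + |x|`, the theorem then reduces to the
triangle inequality `√((|w| + |x|)² + 2²) ≤ √(w² + 1) + √(x² + 1)` in the plane.
-/

noncomputable def V0 (x : ℝ) : ℝ := ∫ u in Set.Ioi (0:ℝ), Real.exp (-u) / Real.sqrt (x^2 + u)

open Real MeasureTheory Set Filter Topology

lemma integrableOn_exp_neg_div_sqrt_add {a : ℝ} (ha : 0 ≤ a) :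
    IntegrableOn (fun u => exp (-u) / √(a + u)) (Ioi 0) := by
  have hGamma : IntegrableOn (fun u : ℝ => exp (-u) * u ^ ((1 : ℝ) / 2 - 1)) (Ioi 0) :=
    GammaIntegral_convergent one_half_pos
  refine hGamma.mono' (Measurable.aestronglyMeasurable (by fun_prop)) ?_
  filter_upwards [ae_restrict_mem measurableSet_Ioi] with u (hu : 0 < u)
  rw [norm_of_nonneg (by positivity), show (1 : ℝ) / 2 - 1 = -(1 / 2) by norm_num,
    rpow_neg hu.le, ← sqrt_eq_rpow, div_eq_mul_inv]
  gcongr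
  linarith

theorem integral_exp_neg_mul_sub_deriv {g g' : ℝ → ℝ} (hcont : ContinuousWithinAt g (Ici 0) 0)
    (hderiv : ∀ u ∈ Ioi (0 : ℝ), HasDerivAt g (g' u) u)
    (hint : IntegrableOn (fun u => exp (-u) * (g u - g' u)) (Ioi 0))
    (hlim : Tendsto (fun u => exp (-u) * g u) atTop (𝓝 0)) :
    ∫ u in Ioi 0, exp (-u) * (g u - g' u) = g 0 := by
  have key := integral_Ioi_of_hasDerivAt_of_tendsto (f := fun u => -(exp (-u) * g u))
    ((continuous_exp.comp continuous_neg).continuousWithinAt.mul hcont).neg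
    (fun u hu => ((hasDerivAt_neg u).exp.mul (hderiv u hu)).neg.congr_deriv (by ring)) hint
    (by simpa using hlim.neg)
  simpa using key

lemma sqrt_add_sub_sqrt_le {x c : ℝ} (hx : 0 ≤ x) (hc : 0 ≤ c) : √(x + c) - √x ≤ √c := by
  rw [sub_le_iff_le_add, sqrt_le_iff]
  refine ⟨by positivity, ?_⟩
  nlinarith [sq_sqrt hx, sq_sqrt hc, mul_nonneg (sqrt_nonneg c) (sqrt_nonneg x)]

lemma sub_sub_inv_sub_inv_le_inv {s t : ℝ} (hs : 0 < s) (ht : 0 < t) (hts : t ^ 2 = s ^ 2 + 2) :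
    t - s - (1 / (2 * t) - 1 / (2 * s)) ≤ 1 / s := by
  have hgap : t - s = 2 / (t + s) := by
    field_simp
    linear_combination hts
  have hdiff : 1 / s - (2 / (t + s) - (1 / (2 * t) - 1 / (2 * s))) =
      (t - s) ^ 2 / (2 * s * t * (t + s)) := by
    field_simp
    ring
  rw [hgap, ← sub_nonneg, hdiff]
  positivity

lemma inv_le_two_mul_sub_sub_inv_sub_inv {s t : ℝ} (hs : 0 < s) (ht : 0 < t)
    (hts : t ^ 2 = s ^ 2 + 1) :
    1 / s ≤ 2 * (t - s - (1 / (2 * t) - 1 / (2 * s))) := by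
  have hprod : (t - s) * (t + s) = 1 := by linear_combination hts
  have hst : s < t := by nlinarith
  rw [show 2 * (t - s - (1 / (2 * t) - 1 / (2 * s))) = 1 / s + (2 * t * (t - s) - 1) / t by
    field_simp; ring]
  have : 0 ≤ (2 * t * (t - s) - 1) / t := div_nonneg (by nlinarith) ht.le
  linarith

section SqrtGap

variable {a c : ℝ}

lemma hasDerivAt_sqrt_add_sub_sqrt {u : ℝ} (hu : 0 < a + u) (hc : 0 ≤ c) :
    HasDerivAt (fun v => √(a + v + c) - √(a + v))
      (1 / (2 * √(a + u + c)) - 1 / (2 * √(a + u))) u := by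
  have hlin := (hasDerivAt_id' u).const_add a
  exact ((hlin.add_const c).sqrt (by positivity)).sub (hlin.sqrt hu.ne')

lemma integrableOn_exp_neg_mul_sqrt_gap (ha : 0 ≤ a) (hc : 0 ≤ c) :
    IntegrableOn (fun u => exp (-u) *
      (√(a + u + c) - √(a + u) - (1 / (2 * √(a + u + c)) - 1 / (2 * √(a + u))))) (Ioi 0) := by
  refine Integrable.mono' (((integrableOn_exp_neg_Ioi 0).const_mul √c).add
    (integrableOn_exp_neg_div_sqrt_add ha)) (Measurable.aestronglyMeasurable (by fun_prop)) ?_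
  filter_upwards [ae_restrict_mem measurableSet_Ioi] with u (hu : 0 < u)
  have hs : 0 < √(a + u) := sqrt_pos.2 (by linarith)
  have hst : √(a + u) ≤ √(a + u + c) := sqrt_le_sqrt (by linarith)
  have hgap := sqrt_add_sub_sqrt_le (x := a + u) (by linarith) hc
  have hinv : 1 / (2 * √(a + u + c)) ≤ 1 / (2 * √(a + u)) := by gcongr
  have hinv' : 1 / (2 * √(a + u)) ≤ 1 / √(a + u) := by gcongr; linarith
  have : 0 ≤ 1 / (2 * √(a + u + c)) := by positivity
  rw [norm_of_nonneg (mul_nonneg (exp_pos _).le (by linarith))]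
  calc _ ≤ exp (-u) * (√c + 1 / √(a + u)) := by gcongr; linarith
    _ = _ := by simp only [Pi.add_apply]; ring

lemma integral_exp_neg_mul_sqrt_gap (ha : 0 ≤ a) (hc : 0 ≤ c) :
    ∫ u in Ioi 0, exp (-u) *
      (√(a + u + c) - √(a + u) - (1 / (2 * √(a + u + c)) - 1 / (2 * √(a + u)))) =
      √(a + c) - √a := by
  have hlim : Tendsto (fun u => exp (-u) * (√(a + u + c) - √(a + u))) atTop (𝓝 0) := by
    refine squeeze_zero' ?_ ?_ (by simpa using tendsto_exp_neg_atTop_nhds_zero.const_mul √c)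
    · filter_upwards with u
      exact mul_nonneg (exp_pos _).le (sub_nonneg.2 (sqrt_le_sqrt (by linarith)))
    · filter_upwards [eventually_ge_atTop (-a)] with u hu
      rw [mul_comm]
      gcongr
      exact sqrt_add_sub_sqrt_le (by linarith) hc
  simpa using integral_exp_neg_mul_sub_deriv (by fun_prop : Continuous _).continuousWithinAt
    (fun u (hu : 0 < u) => hasDerivAt_sqrt_add_sub_sqrt (a := a) (by linarith) hc)
    (integrableOn_exp_neg_mul_sqrt_gap ha hc) hlim

end SqrtGap

section MillsRatio

variable {a : ℝ}

lemma sqrt_add_two_sub_sqrt_le_integral (ha : 0 ≤ a) :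
    √(a + 2) - √a ≤ ∫ u in Ioi 0, exp (-u) / √(a + u) := by
  rw [← integral_exp_neg_mul_sqrt_gap ha zero_le_two]
  refine setIntegral_mono_on (integrableOn_exp_neg_mul_sqrt_gap ha zero_le_two)
    (integrableOn_exp_neg_div_sqrt_add ha) measurableSet_Ioi fun u (hu : 0 < u) => ?_
  rw [div_eq_mul_one_div (exp (-u))]
  refine mul_le_mul_of_nonneg_left ?_ (exp_pos _).le
  exact sub_sub_inv_sub_inv_le_inv (sqrt_pos.2 (by linarith)) (sqrt_pos.2 (by linarith))
    (by rw [sq_sqrt, sq_sqrt] <;> linarith)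

lemma integral_le_two_mul_sqrt_add_one_sub_sqrt (ha : 0 ≤ a) :
    ∫ u in Ioi 0, exp (-u) / √(a + u) ≤ 2 * (√(a + 1) - √a) := by
  rw [← integral_exp_neg_mul_sqrt_gap ha zero_le_one, ← integral_const_mul]
  refine setIntegral_mono_on (integrableOn_exp_neg_div_sqrt_add ha)
    ((integrableOn_exp_neg_mul_sqrt_gap ha zero_le_one).const_mul 2) measurableSet_Ioi
    fun u (hu : 0 < u) => ?_
  rw [div_eq_mul_one_div (exp (-u)), mul_left_comm]
  refine mul_le_mul_of_nonneg_left ?_ (exp_pos _).le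
  exact inv_le_two_mul_sub_sub_inv_sub_inv (sqrt_pos.2 (by linarith)) (sqrt_pos.2 (by linarith))
    (by rw [sq_sqrt, sq_sqrt] <;> linarith)

end MillsRatio

lemma sqrt_sq_add_two_sub_abs_le_V0 (x : ℝ) : √(x ^ 2 + 2) - |x| ≤ V0 x := by
  simpa [V0, sqrt_sq_eq_abs] using sqrt_add_two_sub_sqrt_le_integral (sq_nonneg x)

lemma V0_le_two_mul_sqrt_sq_add_one_sub_abs (x : ℝ) : V0 x ≤ 2 * (√(x ^ 2 + 1) - |x|) := by
  simpa [V0, sqrt_sq_eq_abs] using integral_le_two_mul_sqrt_add_one_sub_sqrt (sq_nonneg x)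

lemma V0_pos (x : ℝ) : 0 < V0 x := by
  have : |x| < √(x ^ 2 + 2) := by
    rw [← sqrt_sq_eq_abs]
    exact sqrt_lt_sqrt (sq_nonneg x) (by linarith)
  linarith [sqrt_sq_add_two_sub_abs_le_V0 x]

lemma sqrt_sq_add_one_add_abs_div_two_le_inv_V0 (x : ℝ) :
    (√(x ^ 2 + 1) + |x|) / 2 ≤ 1 / V0 x := by
  rw [le_div_iff₀ (V0_pos x)]
  have hsq : √(x ^ 2 + 1) ^ 2 = x ^ 2 + 1 := sq_sqrt (by positivity)
  have habs : 0 ≤ √(x ^ 2 + 1) + |x| := by positivity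
  nlinarith [mul_le_mul_of_nonneg_left (V0_le_two_mul_sqrt_sq_add_one_sub_abs x) habs, sq_abs x]

lemma sqrt_sq_add_four_sub_abs_div_two_le_V0_div_sqrt_two (d : ℝ) :
    (√(d ^ 2 + 4) - |d|) / 2 ≤ 1 / √2 * V0 (d / √2) := by
  have hscale : √((d / √2) ^ 2 + 2) - |d / √2| = (√(d ^ 2 + 4) - |d|) / √2 := by
    rw [abs_div, abs_of_pos (sqrt_pos.2 two_pos), div_pow, sq_sqrt zero_le_two,
      show d ^ 2 / 2 + 2 = (d ^ 2 + 4) / 2 by ring, sqrt_div (by positivity), sub_div]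
  have hlow := sqrt_sq_add_two_sub_abs_le_V0 (d / √2)
  rw [hscale] at hlow
  calc (√(d ^ 2 + 4) - |d|) / 2 = 1 / √2 * ((√(d ^ 2 + 4) - |d|) / √2) := by
        field_simp
        rw [sq_sqrt zero_le_two]
    _ ≤ 1 / √2 * V0 (d / √2) := by gcongr

lemma sqrt_add_sq_add_add_sq_le (a b c d : ℝ) :
    √((a + b) ^ 2 + (c + d) ^ 2) ≤ √(a ^ 2 + c ^ 2) + √(b ^ 2 + d ^ 2) := by
  have hcs : a * b + c * d ≤ √(a ^ 2 + c ^ 2) * √(b ^ 2 + d ^ 2) := by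
    rw [← sqrt_mul (by positivity)]
    exact (le_abs_self _).trans (abs_le_sqrt (by nlinarith [sq_nonneg (a * d - b * c)]))
  rw [sqrt_le_iff]
  refine ⟨by positivity, ?_⟩
  nlinarith [sq_sqrt (by positivity : 0 ≤ a ^ 2 + c ^ 2), sq_sqrt (by positivity : 0 ≤ b ^ 2 + d ^ 2)]

lemma one_le_sqrt_sq_add_four_sub_div_two_mul {a b d : ℝ} (hd : 0 ≤ d) (hdab : d ≤ a + b) :
    1 ≤ (√(d ^ 2 + 4) - d) / 2 * ((√(a ^ 2 + 1) + a) / 2 + (√(b ^ 2 + 1) + b) / 2) := by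
  have hmink : √((a + b) ^ 2 + 4) ≤ √(a ^ 2 + 1) + √(b ^ 2 + 1) := by
    simpa [one_pow, show (1 + 1 : ℝ) ^ 2 = 4 by norm_num] using sqrt_add_sq_add_add_sq_le a b 1 1
  have hmono : √(d ^ 2 + 4) ≤ √((a + b) ^ 2 + 4) := sqrt_le_sqrt (by nlinarith)
  have hsq : √(d ^ 2 + 4) ^ 2 = d ^ 2 + 4 := sq_sqrt (by positivity)
  have hgt : d < √(d ^ 2 + 4) := by nlinarith [sqrt_nonneg (d ^ 2 + 4)]
  nlinarith [mul_le_mul_of_nonneg_left (add_le_add (hmono.trans hmink) hdab) (sub_nonneg.2 hgt.le)]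

theorem V0_triangle_ineq : ∀ w x : ℝ,
    (1 / Real.sqrt 2) * V0 (|w - x| / Real.sqrt 2) * (1 / V0 w + 1 / V0 x) ≥ 1 := by
  intro w x
  have hfirst := sqrt_sq_add_four_sub_abs_div_two_le_V0_div_sqrt_two |w - x|
  rw [abs_abs] at hfirst
  have hw := sqrt_sq_add_one_add_abs_div_two_le_inv_V0 w
  have hx := sqrt_sq_add_one_add_abs_div_two_le_inv_V0 x
  rw [← sq_abs w] at hw
  rw [← sq_abs x] at hx
  have hV : 0 ≤ 1 / √2 * V0 (|w - x| / √2) := mul_nonneg (by positivity) (V0_pos _).le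
  calc (1 : ℝ) ≤ (√(|w - x| ^ 2 + 4) - |w - x|) / 2 *
        ((√(|w| ^ 2 + 1) + |w|) / 2 + (√(|x| ^ 2 + 1) + |x|) / 2) :=
        one_le_sqrt_sq_add_four_sub_div_two_mul (abs_nonneg _) (abs_sub w x)
    _ ≤ 1 / √2 * V0 (|w - x| / √2) * (1 / V0 w + 1 / V0 x) :=
        mul_le_mul hfirst (add_le_add hw hx) (by positivity) hV
end

section
/- For all x > 0, |V_0(x) − 1/x| < 1/(2x³). -/
open MeasureTheory Set Real

lemma int_u_exp : (∫ u in Set.Ioi (0:ℝ), Real.exp (-u) * u) = 1 := by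
  have h := Real.Gamma_eq_integral (by norm_num : (0:ℝ) < 2)
  have h2 : Real.Gamma 2 = 1 := by simpa using Real.Gamma_ofNat_eq_factorial 1
  rw [h2] at h
  rw [h]
  refine setIntegral_congr_fun measurableSet_Ioi (fun u hu => ?_)
  norm_num [Real.rpow_one]

lemma integrable_u_exp : IntegrableOn (fun u : ℝ => Real.exp (-u) * u) (Set.Ioi 0) := by
  have := Real.GammaIntegral_convergent (by norm_num : (0:ℝ) < 2)
  refine this.congr_fun (fun u hu => ?_) measurableSet_Ioi
  norm_num [Real.rpow_one]

lemma integrable_exp_neg : IntegrableOn (fun u : ℝ => Real.exp (-u)) (Set.Ioi 0) := by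
  simpa using exp_neg_integrableOn_Ioi 0 one_pos

lemma key_lt {x u : ℝ} (hx : 0 < x) (hu : 0 < u) :
    1/x - u/(2*x^3) < 1 / Real.sqrt (x^2 + u) := by
  have hpos : (0:ℝ) < x^2 + u := by positivity
  set s := Real.sqrt (x^2 + u) with hs_def
  have hs : 0 < s := Real.sqrt_pos.mpr hpos
  have hs2 : s * s = x^2 + u := Real.mul_self_sqrt hpos.le
  have h1 : (2*x^2 - u) * s < 2*x^3 := by
    rcases le_or_gt (2*x^2 - u) 0 with h | h
    · have h0 : (2*x^2 - u) * s ≤ 0 := mul_nonpos_of_nonpos_of_nonneg h hs.le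
      nlinarith [pow_pos hx 3]
    · refine lt_of_pow_lt_pow_left₀ 2 (by positivity) ?_
      have e2 : ((2*x^2 - u) * s)^2 = (2*x^2 - u)^2 * (x^2 + u) := by
        rw [mul_pow, show s^2 = x^2 + u from by rw [pow_two]; exact hs2]
      rw [e2]
      nlinarith [mul_pos (mul_pos hu hu) (mul_pos hx hx), mul_pos (mul_pos hu hu) h]
  have e : 1/x - u/(2*x^3) = (2*x^2 - u)/(2*x^3) := by field_simp
  rw [e, div_lt_div_iff₀ (by positivity) hs]
  linarith

lemma key_le {x u : ℝ} (hx : 0 < x) (hu : 0 ≤ u) :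
    1 / Real.sqrt (x^2 + u) ≤ 1/x := by
  have h : x ≤ Real.sqrt (x^2 + u) := by
    have := Real.sqrt_le_sqrt (by linarith : x^2 ≤ x^2 + u)
    rwa [Real.sqrt_sq hx.le] at this
  exact one_div_le_one_div_of_le hx h

lemma integrable_f {x : ℝ} (hx : 0 < x) :
    IntegrableOn (fun u : ℝ => Real.exp (-u) / Real.sqrt (x^2 + u)) (Set.Ioi 0) := by
  refine Integrable.mono' (g := fun u => Real.exp (-u) * (1/x))
    (integrable_exp_neg.mul_const _) ?_ ?_
  · exact ((Real.measurable_exp.comp measurable_neg).div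
      ((measurable_const.add measurable_id).sqrt)).aestronglyMeasurable
  · filter_upwards [ae_restrict_mem measurableSet_Ioi] with u hu
    have hu' : (0:ℝ) < u := hu
    have h1 : 0 < Real.sqrt (x^2 + u) := Real.sqrt_pos.mpr (by positivity)
    rw [Real.norm_eq_abs, abs_of_nonneg (by positivity)]
    have := key_le hx hu'.le
    calc Real.exp (-u) / Real.sqrt (x^2 + u) = Real.exp (-u) * (1 / Real.sqrt (x^2 + u)) := by ring
      _ ≤ Real.exp (-u) * (1/x) := by
          exact mul_le_mul_of_nonneg_left this (Real.exp_pos _).le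

lemma integrable_L {x : ℝ} (hx : 0 < x) :
    IntegrableOn (fun u : ℝ => Real.exp (-u) * (1/x - u/(2*x^3))) (Set.Ioi 0) := by
  have : (fun u : ℝ => Real.exp (-u) * (1/x - u/(2*x^3))) =
      fun u => Real.exp (-u) * (1/x) - (Real.exp (-u) * u) * (1/(2*x^3)) := by
    funext u; ring
  rw [this]
  exact (integrable_exp_neg.mul_const _).sub (integrable_u_exp.mul_const _)

lemma int_L {x : ℝ} (hx : 0 < x) :
    (∫ u in Set.Ioi (0:ℝ), Real.exp (-u) * (1/x - u/(2*x^3))) = 1/x - 1/(2*x^3) := by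
  have e : (fun u : ℝ => Real.exp (-u) * (1/x - u/(2*x^3))) =
      fun u => Real.exp (-u) * (1/x) - (Real.exp (-u) * u) * (1/(2*x^3)) := by
    funext u; ring
  rw [e, integral_sub (integrable_exp_neg.mul_const _) (integrable_u_exp.mul_const _),
    integral_mul_const, integral_mul_const, integral_exp_neg_Ioi_zero, int_u_exp]
  ring

theorem V0_close_to_coulomb : ∀ x : ℝ, 0 < x → |V0 x - 1/x| < 1 / (2*x^3) := by
  intro x hx
  have hfi := integrable_f hx
  have hLi := integrable_L hx
  -- upper bound: V0 x ≤ 1/x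
  have hupper : V0 x ≤ 1/x := by
    have : V0 x ≤ ∫ u in Set.Ioi (0:ℝ), Real.exp (-u) * (1/x) := by
      refine setIntegral_mono_on hfi (integrable_exp_neg.mul_const _) measurableSet_Ioi
        (fun u hu => ?_)
      have hu' : (0:ℝ) < u := hu
      have h1 : 0 < Real.sqrt (x^2 + u) := Real.sqrt_pos.mpr (by positivity)
      calc Real.exp (-u) / Real.sqrt (x^2 + u)
          = Real.exp (-u) * (1 / Real.sqrt (x^2 + u)) := by ring
        _ ≤ Real.exp (-u) * (1/x) :=
            mul_le_mul_of_nonneg_left (key_le hx hu'.le) (Real.exp_pos _).le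
    rwa [integral_mul_const, integral_exp_neg_Ioi_zero, one_mul] at this
  -- lower bound: V0 x > 1/x - 1/(2x³)
  have hlower : 1/x - 1/(2*x^3) < V0 x := by
    set g : ℝ → ℝ := fun u =>
      Real.exp (-u) / Real.sqrt (x^2 + u) - Real.exp (-u) * (1/x - u/(2*x^3)) with hg
    have hgi : IntegrableOn g (Set.Ioi 0) := hfi.sub hLi
    have hgpos : ∀ u : ℝ, u ∈ Set.Ioi (0:ℝ) → 0 < g u := by
      intro u hu
      have hu' : (0:ℝ) < u := hu
      have h := key_lt hx hu'
      have h1 : 0 < Real.sqrt (x^2 + u) := Real.sqrt_pos.mpr (by positivity)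
      have : Real.exp (-u) * (1/x - u/(2*x^3)) < Real.exp (-u) * (1 / Real.sqrt (x^2 + u)) :=
        mul_lt_mul_of_pos_left h (Real.exp_pos _)
      simp only [hg]
      calc (0:ℝ) < Real.exp (-u) * (1 / Real.sqrt (x^2 + u))
            - Real.exp (-u) * (1/x - u/(2*x^3)) := by linarith
        _ = Real.exp (-u) / Real.sqrt (x^2 + u) - Real.exp (-u) * (1/x - u/(2*x^3)) := by ring
    have hae : 0 ≤ᶠ[ae (volume.restrict (Set.Ioi (0:ℝ)))] g := by
      filter_upwards [ae_restrict_mem measurableSet_Ioi] with u hu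
      exact (hgpos u hu).le
    have hpos : 0 < ∫ u in Set.Ioi (0:ℝ), g u := by
      rw [setIntegral_pos_iff_support_of_nonneg_ae hae hgi]
      have hsub : Set.Ioi (0:ℝ) ⊆ Function.support g ∩ Set.Ioi 0 :=
        fun u hu => ⟨(hgpos u hu).ne', hu⟩
      have hle : volume (Set.Ioi (0:ℝ)) ≤ volume (Function.support g ∩ Set.Ioi 0) :=
        measure_mono hsub
      rw [Real.volume_Ioi] at hle
      exact lt_of_lt_of_le ENNReal.zero_lt_top hle
    have heq : (∫ u in Set.Ioi (0:ℝ), g u) = V0 x - (1/x - 1/(2*x^3)) := by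
      rw [hg]
      rw [integral_sub hfi hLi, int_L hx]
      rfl
    rw [heq] at hpos
    linarith
  rw [abs_lt]
  constructor
  · linarith
  · have : (0:ℝ) < 1/(2*x^3) := by positivity
    linarith
end
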